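/- Let m, s ∈ ℕ and let k_1,…,k_{3m} ∈ ℕ satisfy k_1 + ⋯ + k_{3m} = m·s. Over Σ = {a,b,c}, let u_start = b^m, u_end = (a^s b c³)^m, n = 3m, and for 1 ≤ i ≤ 3m let the i-th rule be w_i → w'_i with w_i = b and w'_i = a^{k_i} b c. Then this instance satisfies REP if and only if the multiset {k_1,…,k_{3m}} can be partitioned into m disjoint groups of three elements each, such that the elements of each group sum exactly to s. -/

import Mathlib

/-!
Framework for REP (Rewriting with Programmed Rules) and the associated word
equations α_μ = β_μ.  Constants: `Option A` models Σ ∪ {#}, where `none` is the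
fresh letter `#` and `some a` embeds a ∈ Σ.  Variables are modelled by `ℕ`
(the variable x_i is `i`).
-/

namespace REP

/-- `u_end` is obtained from `u_start` by applying each of the `n` rules
`w i → w' i` (for `i = 1, …, n`) once, in order, each application replacing one
occurrence of `w i` by `w' i`. -/
def SatisfiesREP {A : Type} (n : ℕ) (ustart uend : List A) (w w' : ℕ → List A) : Prop :=
  ∃ u : ℕ → List A, u 0 = ustart ∧ u n = uend ∧
    ∀ i, 1 ≤ i → i ≤ n → ∃ s t : List A,
      u (i - 1) = s ++ w i ++ t ∧ u i = s ++ w' i ++ t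

/-- Apply a substitution (identity on constants) to a pattern. -/
def applySub {A : Type} (h : ℕ → List (Option A)) : List (Option A ⊕ ℕ) → List (Option A)
  | [] => []
  | Sum.inl a :: rest => a :: applySub h rest
  | Sum.inr x :: rest => h x ++ applySub h rest

/-- Embed a constant word over Σ into patterns over Σ ∪ {#}. -/
def lift {A : Type} (u : List A) : List (Option A ⊕ ℕ) := u.map (fun a => Sum.inl (some a))

/-- Embed a constant word over Σ into words over Σ ∪ {#}. -/
def liftW {A : Type} (u : List A) : List (Option A) := u.map some

/-- The fresh letter `#` as a pattern symbol. -/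
def hash {A : Type} : Option A ⊕ ℕ := Sum.inl none

/-- `x_1 w_1 x_2 w_2 ⋯ x_n w_n`. -/
def blocks {A : Type} (w : ℕ → List A) : ℕ → List (Option A ⊕ ℕ)
  | 0 => []
  | n + 1 => blocks w n ++ (Sum.inr (n + 1) :: lift (w (n + 1)))

/-- α_μ = `x_1 w_1 x_2 w_2 ⋯ x_n w_n x_{n+1} # u_end`. -/
def alphaMu {A : Type} (n : ℕ) (uend : List A) (w : ℕ → List A) : List (Option A ⊕ ℕ) :=
  blocks w n ++ [Sum.inr (n + 1), hash] ++ lift uend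

/-- β_μ = `# u_start x_1 w'_1 x_2 w'_2 ⋯ x_n w'_n x_{n+1}`. -/
def betaMu {A : Type} (n : ℕ) (ustart : List A) (w' : ℕ → List A) : List (Option A ⊕ ℕ) :=
  hash :: lift ustart ++ blocks w' n ++ [Sum.inr (n + 1)]

/-- `x_1 w_1 ⋯ x_i w_i`. -/
def alphaPrefix {A : Type} (w : ℕ → List A) (i : ℕ) : List (Option A ⊕ ℕ) := blocks w i

/-- `# u_start x_1 w'_1 ⋯ w'_{i-1} x_i`. -/
def betaPrefix {A : Type} (ustart : List A) (w' : ℕ → List A) (i : ℕ) :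
    List (Option A ⊕ ℕ) :=
  hash :: lift ustart ++ blocks w' (i - 1) ++ [Sum.inr i]

/-- `h` is a solution of the equation α = β. -/
def IsSolution {A : Type} (h : ℕ → List (Option A)) (α β : List (Option A ⊕ ℕ)) : Prop :=
  applySub h α = applySub h β

/-- `h` is an overlapping solution of α_μ = β_μ : it is a solution and, for every
`1 ≤ i ≤ n`, there is `z_i` such that `w_i z_i` is a suffix of `h(x_i)` and
`h(# u_start x_1 w'_1 ⋯ w'_{i-1} x_i) = h(x_1 w_1 ⋯ x_i w_i) z_i`. -/
def OverlappingSolution {A : Type} (n : ℕ) (ustart uend : List A) (w w' : ℕ → List A)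
    (h : ℕ → List (Option A)) : Prop :=
  IsSolution h (alphaMu n uend w) (betaMu n ustart w') ∧
  ∀ i, 1 ≤ i → i ≤ n → ∃ z : List (Option A),
    (liftW (w i) ++ z) <:+ h i ∧
    applySub h (betaPrefix ustart w' i) = applySub h (alphaPrefix w i) ++ z

/-- `n`-fold concatenation `u^n` of the word `u`. -/
def npow {A : Type} (u : List A) : ℕ → List A
  | 0 => []
  | n + 1 => u ++ npow u n

/-- `y_i`, the suffix of `h(x_i)` of length `|v_i| - |w_i|`. -/
def ySuf {A : Type} (h : ℕ → List (Option A)) (v : ℕ → List (Option A)) (w : ℕ → List A)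
    (i : ℕ) : List (Option A) :=
  (h i).drop ((h i).length - ((v i).length - (w i).length))

/-- Two words are conjugate if `u = st` and `v = ts` for some words `s`, `t`. -/
def Conj {B : Type} (u v : List B) : Prop := ∃ s t : List B, u = s ++ t ∧ v = t ++ s

/-- The words `v_1, …, v_n` associated with an overlapping solution `h`
(as guaranteed by the characterisation of overlapping solutions):
`v_i` is a prefix of `h(x_i)`, `|w_i| ≤ |v_i|`, `h(x_i) w_i` is a prefix of `v_i^ω`
(i.e. of `v_i^m` for all sufficiently large `m`), `v_1 = # u_start`,
`v_i = y_{i-1} w'_{i-1}` for `2 ≤ i ≤ n`, and `y_n w'_n h(x_{n+1}) = h(x_{n+1}) # u_end`. -/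
def AssocWords {A : Type} (n : ℕ) (ustart uend : List A) (w w' : ℕ → List A)
    (h : ℕ → List (Option A)) (v : ℕ → List (Option A)) : Prop :=
  (∀ i, 1 ≤ i → i ≤ n →
    v i <+: h i ∧ (w i).length ≤ (v i).length ∧
    ∃ N : ℕ, ∀ m : ℕ, N ≤ m → (h i ++ liftW (w i)) <+: npow (v i) m) ∧
  v 1 = none :: liftW ustart ∧
  (∀ i, 2 ≤ i → i ≤ n → v i = ySuf h v w (i - 1) ++ liftW (w' (i - 1))) ∧
  ySuf h v w n ++ liftW (w' n) ++ h (n + 1) = h (n + 1) ++ none :: liftW uend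

end REP

/-!
Every word reachable from `b^m` is a sequence of `m` blocks `a^x b c^y`, because the rule
`b → a^k b c` turns one block `a^x b c^y` into `a^(x+k) b c^(y+1)`.  A run of the `3m` rules is
therefore the same as an assignment `g` of rules to blocks, and block `j` ends up as
`a^(∑_{g t = j} k t) b c^#{t | g t = j}`.  Since the block decomposition of a word is unique,
the final word is `(a^s b c³)^m` exactly when every block receives three rules of total weight `s`.
-/

namespace List

variable {α : Type*}

lemma exists_eq_append_of_append_eq_append_cons {a : α} {x y s t : List α} (ha : a ∉ x)
    (h : x ++ y = s ++ a :: t) : ∃ r, s = x ++ r ∧ y = r ++ a :: t := by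
  rcases append_eq_append_iff.mp h with ⟨r, hs, hy⟩ | ⟨r, hx, ht⟩
  · exact ⟨r, hs, hy⟩
  · cases r with
    | nil => exact ⟨[], by simpa using hx.symm, by simpa using ht.symm⟩
    | cons b r =>
      obtain ⟨rfl, -⟩ := cons.inj ht
      exact absurd (hx ▸ by simp) ha

lemma replicate_append_inj_of_head?_ne {a : α} {m n : ℕ} {x y : List α}
    (hx : x.head? ≠ some a) (hy : y.head? ≠ some a)
    (h : replicate m a ++ x = replicate n a ++ y) : m = n ∧ x = y := by
  induction m generalizing n with
  | zero =>
    cases n with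
    | zero => exact ⟨rfl, by simpa using h⟩
    | succ n =>
      rw [replicate_zero, nil_append] at h
      simp [h, replicate_succ] at hx
  | succ m ih =>
    cases n with
    | zero =>
      rw [replicate_zero, nil_append] at h
      simp [← h, replicate_succ] at hy
    | succ n =>
      obtain ⟨hmn, hxy⟩ := ih (by simpa [replicate_succ] using h)
      exact ⟨congrArg (· + 1) hmn, hxy⟩

end List

namespace REP

open List

-- `block (x, y)` is the word `a^x b c^y`, with the letters a, b, c encoded as `0, 1, 2 : Fin 3`.
def block (p : ℕ × ℕ) : List (Fin 3) := replicate p.1 0 ++ 1 :: replicate p.2 2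

lemma block_add (p : ℕ × ℕ) (c : ℕ) :
    block (p + (c, 1)) = replicate p.1 0 ++ (replicate c 0 ++ [1, 2]) ++ replicate p.2 2 := by
  simp only [block, Prod.fst_add, Prod.snd_add, replicate_add, replicate_succ, append_assoc,
    cons_append, nil_append]

lemma head?_flatMap_block_ne_two (l : List (ℕ × ℕ)) : (l.flatMap block).head? ≠ some 2 := by
  rcases l with _ | ⟨⟨_ | x, y⟩, l⟩ <;> simp [block, replicate_succ]

lemma flatMap_block_injective : Function.Injective (flatMap block) := by
  intro l
  induction l with
  | nil => rintro (_ | ⟨q, l'⟩) h <;> simp_all [block]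
  | cons p l ih =>
    rintro (_ | ⟨q, l'⟩) h
    · simp [block] at h
    · simp only [flatMap_cons, block, append_assoc, cons_append] at h
      obtain ⟨h₁, h'⟩ := replicate_append_inj_of_head?_ne (by simp) (by simp) h
      obtain ⟨h₂, h''⟩ := replicate_append_inj_of_head?_ne
        (head?_flatMap_block_ne_two l) (head?_flatMap_block_ne_two l') (cons.inj h').2
      rw [Prod.ext h₁ h₂, ih h'']

lemma exists_of_flatMap_block_eq_append_cons {l : List (ℕ × ℕ)} {s t : List (Fin 3)}
    (h : l.flatMap block = s ++ 1 :: t) :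
    ∃ l₁ p l₂, l = l₁ ++ p :: l₂ ∧ s = l₁.flatMap block ++ replicate p.1 0 ∧
      t = replicate p.2 2 ++ l₂.flatMap block := by
  induction l generalizing s with
  | nil => simp at h
  | cons p l ih =>
    simp only [flatMap_cons, block, append_assoc, cons_append] at h
    obtain ⟨r, rfl, hr⟩ := exists_eq_append_of_append_eq_append_cons (by simp) h
    rcases r with _ | ⟨b, r⟩
    · exact ⟨[], p, l, rfl, by simp, (cons.inj hr).2.symm⟩
    · rw [cons_append] at hr
      obtain ⟨rfl, hr₁⟩ := cons.inj hr
      obtain ⟨r', rfl, hr'⟩ := exists_eq_append_of_append_eq_append_cons (by simp) hr₁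
      obtain ⟨l₁, q, l₂, rfl, rfl, rfl⟩ := ih hr'
      exact ⟨p :: l₁, q, l₂, rfl, by simp [block], rfl⟩

lemma flatMap_block_append_cons (l₁ l₂ : List (ℕ × ℕ)) (p : ℕ × ℕ) :
    (l₁ ++ p :: l₂).flatMap block =
      l₁.flatMap block ++ replicate p.1 0 ++ [1] ++ (replicate p.2 2 ++ l₂.flatMap block) := by
  simp [block]

lemma flatMap_block_append_add_cons (l₁ l₂ : List (ℕ × ℕ)) (p : ℕ × ℕ) (c : ℕ) :
    (l₁ ++ (p + (c, 1)) :: l₂).flatMap block =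
      l₁.flatMap block ++ replicate p.1 0 ++ (replicate c 0 ++ [1, 2]) ++
        (replicate p.2 2 ++ l₂.flatMap block) := by
  simp [block_add]

lemma rewrite_flatMap_block_iff (l : List (ℕ × ℕ)) (c : ℕ) (w : List (Fin 3)) :
    (∃ s t, l.flatMap block = s ++ [1] ++ t ∧ w = s ++ (replicate c 0 ++ [1, 2]) ++ t) ↔
      ∃ j < l.length, w = (l.modify j (· + (c, 1))).flatMap block := by
  constructor
  · rintro ⟨s, t, hl, rfl⟩
    obtain ⟨l₁, p, l₂, rfl, rfl, rfl⟩ :=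
      exists_of_flatMap_block_eq_append_cons (by rw [hl, append_assoc, singleton_append])
    refine ⟨l₁.length, by simp, ?_⟩
    rw [modify_eq_take_cons_drop (by simp)]
    simp [block_add]
  · rintro ⟨j, hj, rfl⟩
    obtain ⟨l₁, p, l₂, rfl, -, hmod⟩ := exists_of_modify (· + (c, 1)) hj
    rw [hmod]
    exact ⟨_, _, flatMap_block_append_cons l₁ l₂ p, flatMap_block_append_add_cons l₁ l₂ p c⟩

lemma flatMap_block_replicate (m s : ℕ) :
    (replicate m (s, 3)).flatMap block =
      npow (replicate s (0 : Fin 3) ++ [1] ++ replicate 3 2) m := by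
  induction m with
  | zero => rfl
  | succ m ih => simp [replicate_succ, npow, ih, block]

lemma flatMap_block_replicate_zero (m : ℕ) : (replicate m 0).flatMap block = replicate m 1 := by
  induction m with
  | zero => rfl
  | succ m ih => simp [replicate_succ, ih, block]

section Assignment

open Finset

variable (k g : ℕ → ℕ)

/-- Block `j` (counted from `1`) after the first `i` rules, when rule `t` is applied in block
`g t`: the pair `(x, y)` standing for `a^x b c^y`. -/
def groupContent (i j : ℕ) : ℕ × ℕ :=
  ∑ t ∈ Icc 1 i, if g t = j then (k t, 1) else 0

/-- The `m` blocks after the first `i` rules; entry `j` of the list is block `j + 1`. -/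
def groupContents (m i : ℕ) : List (ℕ × ℕ) :=
  (range' 1 m).map (groupContent k g i)

lemma groupContent_succ (i j : ℕ) :
    groupContent k g (i + 1) j =
      groupContent k g i j + if g (i + 1) = j then (k (i + 1), 1) else 0 :=
  sum_Icc_succ_top (by omega) _

lemma groupContent_eq_sum_card (i j : ℕ) :
    groupContent k g i j =
      (∑ t ∈ (Icc 1 i).filter (fun t => g t = j), k t,
        ((Icc 1 i).filter (fun t => g t = j)).card) := by
  simp only [groupContent, Prod.ext_iff, Prod.fst_sum, Prod.snd_sum, apply_ite Prod.fst,
    apply_ite Prod.snd, Prod.fst_zero, Prod.snd_zero, sum_filter, card_filter, and_self]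

lemma groupContents_eq_replicate_iff {m i : ℕ} {p : ℕ × ℕ} :
    groupContents k g m i = replicate m p ↔ ∀ j, 1 ≤ j → j ≤ m → groupContent k g i j = p := by
  simp only [groupContents, eq_replicate_iff, length_map, length_range', true_and,
    List.forall_mem_map, mem_range'_1]
  exact forall_congr' fun j => ⟨fun h h₁ h₂ => h ⟨h₁, by omega⟩, fun h hj => h hj.1 (by omega)⟩

lemma groupContents_zero (m : ℕ) : groupContents k g m 0 = replicate m 0 :=
  (groupContents_eq_replicate_iff k g).2 fun _ _ _ => by simp [groupContent]

lemma groupContents_succ {m i : ℕ} (h : 1 ≤ g (i + 1)) :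
    groupContents k g m (i + 1) =
      (groupContents k g m i).modify (g (i + 1) - 1) (· + (k (i + 1), 1)) := by
  refine ext_getElem (by simp [groupContents]) fun j _ _ => ?_
  simp only [groupContents, getElem_modify, getElem_map, getElem_range', groupContent_succ]
  split_ifs <;> first | omega | simp

variable {k g} in
lemma groupContents_congr {g' : ℕ → ℕ} {m i : ℕ} (h : ∀ t, 1 ≤ t → t ≤ i → g t = g' t) :
    groupContents k g m i = groupContents k g' m i := by
  refine map_congr_left fun j _ => sum_congr rfl fun t ht => ?_
  rw [h t (mem_Icc.1 ht).1 (mem_Icc.1 ht).2]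

end Assignment

lemma exists_assignment_of_rewrites {m n : ℕ} {k : ℕ → ℕ} {u : ℕ → List (Fin 3)}
    (h₀ : u 0 = replicate m 1)
    (hstep : ∀ i, 1 ≤ i → i ≤ n → ∃ s t, u (i - 1) = s ++ [1] ++ t ∧
      u i = s ++ (replicate (k i) 0 ++ [1, 2]) ++ t) :
    ∃ g : ℕ → ℕ, (∀ t, 1 ≤ t → t ≤ n → 1 ≤ g t ∧ g t ≤ m) ∧
      u n = (groupContents k g m n).flatMap block := by
  induction n with
  | zero =>
    exact ⟨fun _ => 1, by omega, by rw [h₀, groupContents_zero, flatMap_block_replicate_zero]⟩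
  | succ n ih =>
    obtain ⟨g, hg, hu⟩ := ih fun i h₁ h₂ => hstep i h₁ (by omega)
    obtain ⟨s, t, hs, ht⟩ := hstep (n + 1) (by omega) le_rfl
    rw [Nat.add_sub_cancel, hu] at hs
    obtain ⟨j, hj, hu'⟩ := (rewrite_flatMap_block_iff _ _ _).1 ⟨s, t, hs, ht⟩
    have hjm : j < m := by simpa [groupContents] using hj
    set g' := Function.update g (n + 1) (j + 1)
    have hgg' : ∀ t, 1 ≤ t → t ≤ n → g t = g' t := fun t _ ht =>
      (Function.update_of_ne (by omega) _ _).symm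
    have hg'n : g' (n + 1) = j + 1 := Function.update_self _ _ _
    refine ⟨g', fun t h₁ h₂ => ?_, ?_⟩
    · rcases Nat.lt_or_ge t (n + 1) with htn | htn
      · rw [← hgg' t h₁ (by omega)]
        exact hg t h₁ (by omega)
      · rw [show t = n + 1 by omega, hg'n]
        omega
    · rw [groupContents_succ k g' (by omega), ← groupContents_congr hgg', hu', hg'n,
        Nat.add_sub_cancel]

lemma rewrites_of_assignment {m : ℕ} {k g : ℕ → ℕ} {n : ℕ}
    (hg : ∀ t, 1 ≤ t → t ≤ n → 1 ≤ g t ∧ g t ≤ m) (i : ℕ) (h₁ : 1 ≤ i) (h₂ : i ≤ n) :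
    ∃ s t, (groupContents k g m (i - 1)).flatMap block = s ++ [1] ++ t ∧
      (groupContents k g m i).flatMap block = s ++ (replicate (k i) 0 ++ [1, 2]) ++ t := by
  obtain ⟨i, rfl⟩ : ∃ i', i = i' + 1 := ⟨i - 1, by omega⟩
  obtain ⟨hg₁, hg₂⟩ := hg (i + 1) h₁ h₂
  rw [Nat.add_sub_cancel, groupContents_succ k g hg₁]
  exact (rewrite_flatMap_block_iff _ _ _).2 ⟨_, by simp [groupContents]; omega, rfl⟩

lemma flatMap_groupContents_eq_npow_iff (m s : ℕ) (k g : ℕ → ℕ) :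
    (groupContents k g m (3 * m)).flatMap block =
        npow (replicate s 0 ++ [1] ++ replicate 3 2) m ↔
      ∀ j, 1 ≤ j → j ≤ m →
        ((Finset.Icc 1 (3 * m)).filter (fun i => g i = j)).card = 3 ∧
        ∑ i ∈ (Finset.Icc 1 (3 * m)).filter (fun i => g i = j), k i = s := by
  rw [← flatMap_block_replicate, flatMap_block_injective.eq_iff, groupContents_eq_replicate_iff]
  simp only [groupContent_eq_sum_card, Prod.mk.injEq, and_comm]

end REP

open REP in
theorem stmt1_general (m s : ℕ) (k : ℕ → ℕ) :
    SatisfiesREP (3 * m)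
      (List.replicate m (1 : Fin 3))
      (npow (List.replicate s (0 : Fin 3) ++ [(1 : Fin 3)] ++ List.replicate 3 (2 : Fin 3)) m)
      (fun _ => [(1 : Fin 3)])
      (fun i => List.replicate (k i) (0 : Fin 3) ++ [(1 : Fin 3), (2 : Fin 3)]) ↔
    ∃ g : ℕ → ℕ,
      (∀ i, 1 ≤ i → i ≤ 3 * m → 1 ≤ g i ∧ g i ≤ m) ∧
      (∀ j, 1 ≤ j → j ≤ m →
        ((Finset.Icc 1 (3 * m)).filter (fun i => g i = j)).card = 3 ∧
        ∑ i ∈ (Finset.Icc 1 (3 * m)).filter (fun i => g i = j), k i = s) := by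
  constructor
  · rintro ⟨u, h₀, hu, hstep⟩
    obtain ⟨g, hg, hug⟩ := exists_assignment_of_rewrites h₀ hstep
    exact ⟨g, hg, (flatMap_groupContents_eq_npow_iff m s k g).1 (hug ▸ hu)⟩
  · rintro ⟨g, hg, hpart⟩
    exact ⟨fun i => (groupContents k g m i).flatMap block,
      by dsimp only; rw [groupContents_zero, flatMap_block_replicate_zero],
      (flatMap_groupContents_eq_npow_iff m s k g).2 hpart, rewrites_of_assignment hg⟩

open REP in
theorem stmt1 (m s : ℕ) (k : ℕ → ℕ)
    (hsum : ∑ i ∈ Finset.Icc 1 (3 * m), k i = m * s) :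
    SatisfiesREP (3 * m)
      (List.replicate m (1 : Fin 3))
      (npow (List.replicate s (0 : Fin 3) ++ [(1 : Fin 3)] ++ List.replicate 3 (2 : Fin 3)) m)
      (fun _ => [(1 : Fin 3)])
      (fun i => List.replicate (k i) (0 : Fin 3) ++ [(1 : Fin 3), (2 : Fin 3)]) ↔
    ∃ g : ℕ → ℕ,
      (∀ i, 1 ≤ i → i ≤ 3 * m → 1 ≤ g i ∧ g i ≤ m) ∧
      (∀ j, 1 ≤ j → j ≤ m →
        ((Finset.Icc 1 (3 * m)).filter (fun i => g i = j)).card = 3 ∧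
        ∑ i ∈ (Finset.Icc 1 (3 * m)).filter (fun i => g i = j), k i = s) :=
  stmt1_general m s k
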